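/- arXiv:math/0211321 — 6 statements merged into one kernel-verified Lean document; each statement's English description precedes it below -/
import Mathlib

section
/- The complex vector space of polynomial solutions of a second-order difference equation A(x)u(x+h) + B(x)u(x) + C(x)u(x-h) = 0, with A, B, C polynomials and A and C not identically zero, has dimension at most 2. -/
/-!
Along an arithmetic progression `x₀ + n h` the equation, solved for `u(x + h)`, is a two-term
recurrence as long as `A(x) ≠ 0`. Since `A` has finitely many roots, some progression avoids them
all; a solution vanishing at `x₀ - h` and `x₀` then vanishes at every `x₀ + n h`, hence is zero.
So evaluation at these two points embeds the solution space into `ℂ²`.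
-/

/-- The space of polynomial solutions of the difference equation
`A(x)u(x+h) + B(x)u(x) + C(x)u(x-h) = 0`. -/
noncomputable def solSpace (h : ℂ) (A B C : Polynomial ℂ) : Submodule ℂ (Polynomial ℂ) where
  carrier := {u | ∀ x : ℂ,
    A.eval x * u.eval (x + h) + B.eval x * u.eval x + C.eval x * u.eval (x - h) = 0}
  add_mem' := by
    intro a b ha hb
    intro x
    have h1 := ha x
    have h2 := hb x
    simp only [Polynomial.eval_add]
    linear_combination h1 + h2
  zero_mem' := by intro x; simp
  smul_mem' := by
    intro c a ha x
    have h1 := ha x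
    simp only [Polynomial.eval_smul, smul_eq_mul]
    linear_combination c * h1

namespace Polynomial

variable {K : Type*} [Field K] [CharZero K]

theorem finite_setOf_isRoot_add_mul {p : K[X]} (hp : p ≠ 0) (x₀ : K) {h : K} (hh : h ≠ 0) :
    {n : ℕ | p.IsRoot (x₀ + n * h)}.Finite :=
  (finite_setOfPred_isRoot hp).preimage fun m _ n _ hmn => by
    simpa [hh] using hmn

theorem exists_forall_eval_add_mul_ne_zero {p : K[X]} (hp : p ≠ 0) {h : K} (hh : h ≠ 0) :
    ∃ x₀ : K, ∀ n : ℕ, p.eval (x₀ + n * h) ≠ 0 := by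
  obtain ⟨N, hN⟩ := (finite_setOf_isRoot_add_mul hp 0 hh).bddAbove
  refine ⟨(N + 1 : ℕ) * h, fun n hn => ?_⟩
  have : N + 1 + n ≤ N := hN (show p.IsRoot (0 + (N + 1 + n : ℕ) * h) by
    push_cast at hn ⊢; rwa [zero_add, add_mul])
  omega

theorem eq_zero_of_forall_eval_add_mul_eq_zero {u : K[X]} (x₀ : K) {h : K} (hh : h ≠ 0)
    (hu : ∀ n : ℕ, u.eval (x₀ + n * h) = 0) : u = 0 := by
  by_contra hne
  have hall : {n : ℕ | u.IsRoot (x₀ + n * h)} = Set.univ := Set.eq_univ_of_forall hu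
  exact Set.infinite_univ (hall ▸ finite_setOf_isRoot_add_mul hne x₀ hh)

end Polynomial

open Polynomial

variable {h : ℂ} {A B C : ℂ[X]}

theorem eval_add_eq_zero_of_mem_solSpace {u : ℂ[X]} (hu : u ∈ solSpace h A B C) {x : ℂ}
    (hAx : A.eval x ≠ 0) (h₁ : u.eval (x - h) = 0) (h₀ : u.eval x = 0) :
    u.eval (x + h) = 0 := by
  have := hu x
  rw [h₁, h₀, mul_zero, mul_zero, add_zero, add_zero] at this
  exact (mul_eq_zero.mp this).resolve_left hAx

theorem eq_zero_of_mem_solSpace_of_eval_eq_zero {u : ℂ[X]} (hu : u ∈ solSpace h A B C)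
    (hh : h ≠ 0) {x₀ : ℂ} (hA : ∀ n : ℕ, A.eval (x₀ + n * h) ≠ 0)
    (h₁ : u.eval (x₀ - h) = 0) (h₀ : u.eval x₀ = 0) :
    u = 0 := by
  have hvanish : ∀ n : ℕ, u.eval (x₀ + n * h - h) = 0 ∧ u.eval (x₀ + n * h) = 0 := by
    intro n
    induction n with
    | zero => simpa using ⟨h₁, h₀⟩
    | succ n ih =>
      have hnext := eval_add_eq_zero_of_mem_solSpace hu (hA n) ih.1 ih.2
      push_cast
      rw [add_one_mul, ← add_assoc, add_sub_cancel_right]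
      exact ⟨ih.2, hnext⟩
  exact eq_zero_of_forall_eval_add_mul_eq_zero x₀ hh fun n => (hvanish n).2

theorem stmt1_general (h : ℂ) (hh : h ≠ 0) (A B C : Polynomial ℂ)
    (hA : A ≠ 0) :
    Module.rank ℂ (solSpace h A B C) ≤ 2 := by
  obtain ⟨x₀, hx₀⟩ := exists_forall_eval_add_mul_ne_zero hA hh
  let φ : solSpace h A B C →ₗ[ℂ] ℂ × ℂ :=
    ((leval (x₀ - h)).prod (leval x₀)).comp (solSpace h A B C).subtype
  have hφ : Function.Injective φ := by
    refine LinearMap.ker_eq_bot.mp (LinearMap.ker_eq_bot'.mpr fun u hu => ?_)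
    exact Subtype.ext (eq_zero_of_mem_solSpace_of_eval_eq_zero u.2 hh hx₀
      (congrArg Prod.fst hu) (congrArg Prod.snd hu))
  calc Module.rank ℂ (solSpace h A B C) ≤ Module.rank ℂ (ℂ × ℂ) :=
        LinearMap.rank_le_of_injective φ hφ
    _ = 2 := by rw [rank_prod', Module.rank_self, one_add_one_eq_two]

/-- the complex vector space of polynomial solutions of a second-order
difference equation with polynomial coefficients, `A` and `C` not identically zero,
has dimension at most 2. -/
theorem stmt1 (h : ℂ) (hh : h ≠ 0) (A B C : Polynomial ℂ)
    (hA : A ≠ 0) (hC : C ≠ 0) :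
    Module.rank ℂ (solSpace h A B C) ≤ 2 :=
  stmt1_general h hh A B C hA
end

section
/- Let g_1, ..., g_{s+1} be functions and 0 ≤ k ≤ s an integer. For i with s-k+1 ≤ i ≤ s+1, set V_{s-k+1}(i) = W(g_1, ..., g_{s-k}, g_i), a Wronskian of order s-k+1. Then W(V_{s-k+1}(s-k+1), ..., V_{s-k+1}(s+1))(x) = W(g_1, ..., g_{s+1})(x) · ∏_{j=1}^k W(g_1, ..., g_{s-k})(x+jh). -/
/-- Discrete Wronskian of `s` functions: `det (g_i (x + (j-1) h))`. -/
noncomputable def DW (h : ℂ) {s : ℕ} (g : Fin s → ℂ → ℂ) (x : ℂ) : ℂ :=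
  Matrix.det (Matrix.of fun i j : Fin s => g i (x + (j : ℕ) * h))

/-- The first `s - k` of the functions `g_1, ..., g_{s+1}`. -/
def firstTup (s k : ℕ) (hk : k ≤ s) (g : Fin (s + 1) → ℂ → ℂ) :
    Fin (s - k) → ℂ → ℂ :=
  fun j => g (Fin.castLE (by omega) j)

/-!
Sampling at `x, x + h, x + 2h, …` turns discrete Wronskians into Casoratians of sequences, and
for sequences the identity holds over any commutative ring, by induction on the number `m` of
common functions. Bordering by the first sequence `a` and taking consecutive column differences
gives `(∏_{j<n} a (t+j)) · Cas(a, f₁, …, fₙ)(t) = a t · Cas(Cas(a, f₁), …, Cas(a, fₙ))(t)`, which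
turns every Casoratian in the identity for `m + 1` into one in the identity for `m`, times
products of values of `a`; these products agree on both sides. They cancel when the values of
`a` are non-zero-divisors, and in general one replaces `a` by `X + a` over `R[X]`, whose values
are monic, and evaluates at `X = 0`.
-/

section Casoratian

open Finset Matrix Polynomial nonZeroDivisors

variable {R S : Type*} [CommRing R] [CommRing S]

def casoratian {n : ℕ} (f : Fin n → ℕ → R) (t : ℕ) : R :=
  (of fun i j : Fin n => f i (t + j)).det

def pairCasoratian (a g : ℕ → R) : ℕ → R :=
  casoratian ![a, g]

theorem casoratian_comp_cast {n n' : ℕ} (hn : n = n') (f : Fin n' → ℕ → R) :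
    casoratian (f ∘ Fin.cast hn) = casoratian f := by
  subst hn; rfl

@[simp]
theorem casoratian_fin_zero (f : Fin 0 → ℕ → R) (t : ℕ) : casoratian f t = 1 :=
  det_fin_zero

@[simp]
theorem casoratian_fin_one (f : Fin 1 → ℕ → R) (t : ℕ) : casoratian f t = f 0 t := by
  simp [casoratian]

theorem casoratian_fin_two (f : Fin 2 → ℕ → R) (t : ℕ) :
    casoratian f t = f 0 t * f 1 (t + 1) - f 1 t * f 0 (t + 1) := by
  rw [casoratian, det_fin_two]
  simp only [of_apply, Fin.isValue, Fin.coe_ofNat_eq_mod, Nat.zero_mod, add_zero, Nat.mod_succ]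
  ring

theorem map_casoratian (φ : R →+* S) {n : ℕ} (f : Fin n → ℕ → R) (t : ℕ) :
    φ (casoratian f t) = casoratian (fun i => φ ∘ f i) t := by
  rw [casoratian, RingHom.map_det]
  rfl

theorem casoratian_mul_seq {n : ℕ} (v : ℕ → R) (f : Fin n → ℕ → R) (t : ℕ) :
    casoratian (fun i s => v s * f i s) t = (∏ j ∈ range n, v (t + j)) * casoratian f t := by
  rw [casoratian, casoratian, prod_range fun j => v (t + j), ← det_mul_row]
  rfl

theorem prod_range_prod_range_add {M : Type*} [CommMonoid M] (v : ℕ → M) (m k : ℕ) :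
    ∏ t ∈ range (k + 1), ∏ j ∈ range (m + 1), v (t + j)
      = (∏ j ∈ range (m + k + 1), v j) * ∏ t ∈ range k, ∏ j ∈ range m, v (t + 1 + j) := by
  induction k with
  | zero => simp
  | succ k ih =>
    rw [prod_range_succ, ih, prod_range_succ _ k, prod_range_succ _ m,
      show m + (k + 1) + 1 = m + k + 1 + 1 by omega, prod_range_succ _ (m + k + 1),
      show k + 1 + m = m + k + 1 by omega]
    ac_rfl

theorem Fin.comp_append {α β : Sort*} {m n : ℕ} (g : α → β) (u : Fin m → α) (v : Fin n → α) :
    g ∘ Fin.append u v = Fin.append (g ∘ u) (g ∘ v) := by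
  funext i
  refine Fin.addCases (fun l => ?_) (fun r => ?_) i <;> simp

theorem prod_mul_casoratian_cons {n : ℕ} (a : ℕ → R) (f : Fin n → ℕ → R) (t : ℕ) :
    (∏ j ∈ range n, a (t + j)) * casoratian (Fin.cons a f) t
      = a t * casoratian (pairCasoratian a ∘ f) t := by
  set M : Matrix (Fin (n + 1)) (Fin (n + 1)) R :=
    of fun i j => (Fin.cons a f : Fin (n + 1) → ℕ → R) i (t + j)
  -- `M * T` replaces column `j + 1` of `M` by `a (t + j) • col (j + 1) - a (t + j + 1) • col j`.
  set T : Matrix (Fin (n + 1)) (Fin (n + 1)) R := of fun l j =>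
    if l = j then (Fin.cons 1 fun j : Fin n => a (t + j) : Fin (n + 1) → R) j
    else if (l : ℕ) + 1 = j then -a (t + j) else 0
  have hT : T.det = ∏ j ∈ range n, a (t + j) := by
    rw [det_of_isUpperTriangular, Fin.prod_univ_succ, prod_range fun j => a (t + j)]
    · simp [T]
    · intro l j hjl
      have hne : l ≠ j := (ne_of_lt hjl).symm
      have : (l : ℕ) + 1 ≠ j := by have : (j : ℕ) < l := hjl; omega
      simp [T, hne, this]
  have hcol₀ : ∀ i, (M * T) i 0 = M i 0 := by
    intro i
    simp [T, M, Matrix.mul_apply]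
  have hcol_succ : ∀ i (j : Fin n),
      (M * T) i j.succ = a (t + j) * M i j.succ - a (t + j + 1) * M i j.castSucc := by
    intro i j
    rw [Matrix.mul_apply, Fintype.sum_eq_add j.succ j.castSucc]
    · simp only [of_apply, Fin.val_succ, ↓reduceIte, Fin.cons_succ, Fin.val_castSucc,
        Fin.castSucc_lt_succ.ne, mul_neg, add_assoc, M, T]
      ring
    · exact Fin.castSucc_lt_succ.ne'
    · rintro l ⟨h₁, h₂⟩
      have : (l : ℕ) ≠ j := fun h => h₂ (Fin.ext h)
      simp [T, h₁, this]
  have hrow₀ : ∀ j : Fin n, (M * T) 0 j.succ = 0 := by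
    intro j
    simp [hcol_succ, M, add_assoc, mul_comm]
  have hminor : (M * T).submatrix Fin.succ Fin.succ =
      of fun i j : Fin n => pairCasoratian a (f i) (t + j) := by
    ext i j
    simp only [submatrix_apply, hcol_succ, of_apply, Fin.val_succ, Fin.cons_succ, add_assoc,
      Fin.val_castSucc, pairCasoratian, casoratian_fin_two, cons_val_zero, cons_val_one, M]
    ring
  rw [← hT, casoratian, mul_comm, ← det_mul, det_succ_row_zero, Fin.sum_univ_succ]
  simp [hrow₀, hcol₀, hminor, M, casoratian]

theorem prod_mul_casoratian_casoratian_snoc_cons {m k : ℕ} (a : ℕ → R) (c : Fin m → ℕ → R)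
    (b : Fin (k + 1) → ℕ → R) :
    (∏ s ∈ range (k + 1), ∏ j ∈ range (m + 1), a (s + j))
        * casoratian (fun i => casoratian (Fin.snoc (Fin.cons a c) (b i))) 0
      = (∏ s ∈ range (k + 1), a s) * casoratian (fun i => casoratian
          (Fin.snoc (pairCasoratian a ∘ c) (pairCasoratian a (b i)))) 0 := by
  have hentry : ∀ i s, (∏ j ∈ range (m + 1), a (s + j))
        * casoratian (Fin.snoc (Fin.cons a c) (b i)) s
      = a s * casoratian (Fin.snoc (pairCasoratian a ∘ c) (pairCasoratian a (b i))) s := by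
    intro i s
    rw [← Fin.cons_snoc_eq_snoc_cons, prod_mul_casoratian_cons, Fin.comp_snoc]
  have := casoratian_mul_seq (fun s => ∏ j ∈ range (m + 1), a (s + j))
    (fun i => casoratian (Fin.snoc (Fin.cons a c) (b i))) 0
  simp only [hentry, zero_add] at this
  rw [← this, casoratian_mul_seq]
  simp only [zero_add]

theorem casoratian_casoratian_snoc_cons_of_mem_nonZeroDivisors {m k : ℕ} (a : ℕ → R)
    (ha : ∀ t, a t ∈ R⁰) (c : Fin m → ℕ → R) (b : Fin (k + 1) → ℕ → R)
    (ih : casoratian (fun i => casoratian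
        (Fin.snoc (pairCasoratian a ∘ c) (pairCasoratian a (b i)))) 0
      = casoratian (Fin.append (pairCasoratian a ∘ c) (pairCasoratian a ∘ b)) 0
        * ∏ j ∈ range k, casoratian (pairCasoratian a ∘ c) (j + 1)) :
    casoratian (fun i => casoratian (Fin.snoc (Fin.cons a c) (b i))) 0
      = casoratian (Fin.append (Fin.cons a c) b) 0
        * ∏ j ∈ range k, casoratian (Fin.cons a c) (j + 1) := by
  set D := pairCasoratian a
  have hwhole : (∏ j ∈ range (m + k + 1), a j) * casoratian (Fin.append (Fin.cons a c) b) 0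
      = a 0 * casoratian (Fin.append (D ∘ c) (D ∘ b)) 0 := by
    rw [Fin.append_cons, casoratian_comp_cast, ← Fin.comp_append]
    simpa [add_assoc] using prod_mul_casoratian_cons a (Fin.append c b) 0
  have hfirst : ∀ j, (∏ i ∈ range m, a (j + 1 + i)) * casoratian (Fin.cons a c) (j + 1)
      = a (j + 1) * casoratian (D ∘ c) (j + 1) :=
    fun j => prod_mul_casoratian_cons a c (j + 1)
  have hreg : ∏ s ∈ range (k + 1), ∏ j ∈ range (m + 1), a (s + j) ∈ R⁰ :=
    prod_mem fun _ _ => prod_mem fun _ _ => ha _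
  rw [← mul_cancel_left_mem_nonZeroDivisors hreg]
  calc _ = (∏ s ∈ range (k + 1), a s)
        * casoratian (fun i => casoratian (Fin.snoc (D ∘ c) (D (b i)))) 0 :=
      prod_mul_casoratian_casoratian_snoc_cons a c b
    _ = (a 0 * casoratian (Fin.append (D ∘ c) (D ∘ b)) 0)
        * ∏ j ∈ range k, (a (j + 1) * casoratian (D ∘ c) (j + 1)) := by
      rw [ih, prod_range_succ', prod_mul_distrib]
      ring
    _ = _ := by
      rw [← hwhole, prod_congr rfl fun j _ => (hfirst j).symm, prod_mul_distrib,
        prod_range_prod_range_add]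
      ring

theorem casoratian_casoratian_snoc {m k : ℕ} (a : Fin m → ℕ → R) (b : Fin (k + 1) → ℕ → R) :
    casoratian (fun i => casoratian (Fin.snoc a (b i))) 0
      = casoratian (Fin.append a b) 0 * ∏ j ∈ range k, casoratian a (j + 1) := by
  induction m generalizing R with
  | zero =>
    have hsnoc : ∀ i, casoratian (Fin.snoc a (b i)) = b i := fun i => funext (casoratian_fin_one _)
    simp [hsnoc, Fin.append_left_nil a b rfl, casoratian_comp_cast]
  | succ m ih =>
    set φ : R[X] →+* R := evalRingHom 0
    set a' : Fin (m + 1) → ℕ → R[X] := fun i t => (if i = 0 then X else 0) + C (a i t)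
    set b' : Fin (k + 1) → ℕ → R[X] := fun i t => C (b i t)
    have ha : (φ ∘ ·) ∘ a' = a := by funext i t; simp [φ, a', apply_ite]
    have hb : (φ ∘ ·) ∘ b' = b := by funext i t; simp [φ, b']
    have hmonic : ∀ t, a' 0 t ∈ R[X]⁰ := fun t => by
      simpa [a'] using (monic_X_add_C (a 0 t)).mem_nonZeroDivisors
    have := congrArg φ <|
      casoratian_casoratian_snoc_cons_of_mem_nonZeroDivisors _ hmonic (Fin.tail a') b' (ih _ _)
    simp only [map_mul, map_prod, map_casoratian, Fin.cons_self_tail] at this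
    convert this using 3
    · funext t
      rw [Function.comp_apply, map_casoratian, ← ha, ← hb]
      exact congrArg (casoratian · t) (Fin.comp_snoc _ a' (b' _)).symm
    · rw [← ha, ← hb, ← Fin.comp_append]
      rfl
    · rw [← ha]
      rfl

theorem DW_add_mul_eq_casoratian (h x : ℂ) {n : ℕ} (g : Fin n → ℂ → ℂ) (t : ℕ) :
    DW h g (x + t * h) = casoratian ((fun u (c : ℕ) => u (x + c * h)) ∘ g) t := by
  simp only [DW, casoratian, Function.comp_apply, Nat.cast_add, add_mul, add_assoc]

end Casoratian

/-- with `V_{s-k+1}(i) = W(g_1, ..., g_{s-k}, g_i)` for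
`s-k+1 ≤ i ≤ s+1`, one has
`W(V(s-k+1), ..., V(s+1))(x) = W(g_1,...,g_{s+1})(x) ∏_{j=1}^k W(g_1,...,g_{s-k})(x+jh)`. -/
theorem stmt4 (h : ℂ) (s k : ℕ) (hk : k ≤ s) (g : Fin (s + 1) → ℂ → ℂ) (x : ℂ) :
    DW h (fun i : Fin (k + 1) =>
        DW h (Fin.snoc (firstTup s k hk g) (g ⟨s - k + i.1, by omega⟩))) x
      = DW h g x * ∏ j ∈ Finset.range k, DW h (firstTup s k hk g) (x + (j + 1) * h) := by
  set σ : (ℂ → ℂ) → ℕ → ℂ := fun u c => u (x + c * h)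
  have hDW : ∀ {n} (G : Fin n → ℂ → ℂ) (t : ℕ), DW h G (x + t * h) = casoratian (σ ∘ G) t :=
    DW_add_mul_eq_casoratian h x
  have hDW₀ : ∀ {n} (G : Fin n → ℂ → ℂ), DW h G x = casoratian (σ ∘ G) 0 := by
    intro n G
    simpa using hDW G 0
  have hsplit : Fin.append (firstTup s k hk g) (fun i : Fin (k + 1) => g ⟨s - k + i, by omega⟩)
      = g ∘ Fin.cast (by omega) :=
    Fin.append_castAdd_natAdd (f := g ∘ Fin.cast (by omega))
  calc _ = casoratian (fun i : Fin (k + 1) => casoratian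
        (Fin.snoc (σ ∘ firstTup s k hk g) (σ (g ⟨s - k + i, by omega⟩)))) 0 := by
        rw [hDW₀]
        congr 1
        funext i t
        exact (hDW _ t).trans (by rw [Fin.comp_snoc])
    _ = casoratian
          (σ ∘ Fin.append (firstTup s k hk g) fun i : Fin (k + 1) => g ⟨s - k + i, by omega⟩) 0
          * ∏ j ∈ Finset.range k, casoratian (σ ∘ firstTup s k hk g) (j + 1) := by
        rw [casoratian_casoratian_snoc, Fin.comp_append]
        rfl
    _ = _ := by
        rw [hsplit, ← Function.comp_assoc, casoratian_comp_cast, ← hDW₀]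
        congr 1
        refine Finset.prod_congr rfl fun j _ => ?_
        rw [← hDW]
        push_cast
        rfl
end

section
/- Suppose a second-order difference equation A(x)u(x+h)+B(x)u(x)+C(x)u(x-h)=0, where A(x)=∏_{s=1}^n(x-z_s), C(x)=∏_{s=1}^n(x-z_s+Λ_s h), and B is a polynomial, has two polynomial solutions of degrees l and l' with l ≠ l'. Then l + l' - 1 = Λ_1 + ... + Λ_n. -/
open Polynomial

private lemma stmt7_hD_top (p : Polynomial ℂ) (m : ℕ) (hm : p.natDegree ≤ m) :
    hasseDeriv m p = C (p.coeff m) := by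
  ext n
  rw [hasseDeriv_coeff, coeff_C]
  rcases n with _ | n
  · simp
  · simp only [Nat.succ_ne_zero, if_false]
    rw [coeff_eq_zero_of_natDegree_lt (by omega), mul_zero]

private lemma stmt7_hD_sub1 (p : Polynomial ℂ) (m : ℕ) (hm : p.natDegree ≤ m) (h1 : 1 ≤ m) :
    hasseDeriv (m - 1) p = C (p.coeff (m - 1)) + C ((m : ℂ) * p.coeff m) * X := by
  ext n
  rw [hasseDeriv_coeff]
  rcases n with _ | _ | n
  · simp
  · have e1 : 1 + (m - 1) = m := by omega
    rw [e1]
    have e2 : m.choose (m - 1) = m := by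
      rw [Nat.choose_symm h1, Nat.choose_one_right]
    simp [e2]
  · rw [coeff_eq_zero_of_natDegree_lt (by omega), mul_zero]
    simp [coeff_C]

private lemma stmt7_taylor_coeff_top (r : ℂ) (p : Polynomial ℂ) :
    (taylor r p).coeff p.natDegree = p.leadingCoeff := by
  rw [taylor_coeff, stmt7_hD_top p _ le_rfl, eval_C, leadingCoeff]

private lemma stmt7_taylor_lc (r : ℂ) (p : Polynomial ℂ) :
    (taylor r p).leadingCoeff = p.leadingCoeff := by
  rw [leadingCoeff, natDegree_taylor, stmt7_taylor_coeff_top]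

private lemma stmt7_taylor_coeff_pred (r : ℂ) (p : Polynomial ℂ) (m : ℕ)
    (hm : p.natDegree ≤ m) (h1 : 1 ≤ m) :
    (taylor r p).coeff (m - 1) = p.coeff (m - 1) + m * p.coeff m * r := by
  rw [taylor_coeff, stmt7_hD_sub1 p m hm h1]
  simp

private lemma stmt7_delta_coeff (r : ℂ) (p : Polynomial ℂ) (m : ℕ)
    (hm : p.natDegree = m) (h1 : 1 ≤ m) :
    (taylor r p - p).coeff (m - 1) = m * p.leadingCoeff * r := by
  rw [coeff_sub, stmt7_taylor_coeff_pred r p m hm.le h1, leadingCoeff, hm]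
  ring

private lemma stmt7_delta_deg_le (r : ℂ) (p : Polynomial ℂ) (m : ℕ)
    (hm : p.natDegree = m) (h1 : 1 ≤ m) :
    (taylor r p - p).natDegree ≤ m - 1 := by
  rw [natDegree_le_iff_coeff_eq_zero]
  intro k hk
  rw [coeff_sub]
  rcases eq_or_lt_of_le (show m ≤ k by omega) with rfl | hlt
  · rw [← hm, stmt7_taylor_coeff_top, leadingCoeff, sub_self]
  · rw [coeff_eq_zero_of_natDegree_lt (by rw [natDegree_taylor]; omega),
      coeff_eq_zero_of_natDegree_lt (by omega), sub_self]

private lemma stmt7_key (h : ℂ) (hh : h ≠ 0) (n : ℕ) (z : Fin n → ℂ) (Λ : Fin n → ℕ)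
    (B u v : Polynomial ℂ) (l l' : ℕ)
    (hu : u.natDegree = l) (hv : v.natDegree = l') (hll : l < l')
    (hu0 : u ≠ 0) (hv0 : v ≠ 0)
    (hequ : ∀ x : ℂ, (∏ s, (x - z s)) * u.eval (x + h)
      + B.eval x * u.eval x + (∏ s, (x - z s + Λ s * h)) * u.eval (x - h) = 0)
    (heqv : ∀ x : ℂ, (∏ s, (x - z s)) * v.eval (x + h)
      + B.eval x * v.eval x + (∏ s, (x - z s + Λ s * h)) * v.eval (x - h) = 0) :
    l + l' - 1 = ∑ s, Λ s := by
  have ha0 : u.leadingCoeff ≠ 0 := leadingCoeff_ne_zero.mpr hu0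
  have hb0 : v.leadingCoeff ≠ 0 := leadingCoeff_ne_zero.mpr hv0
  set a := u.leadingCoeff with ha
  set b := v.leadingCoeff with hb
  have hl'1 : 1 ≤ l' := by omega
  set W : Polynomial ℂ := u * taylor h v - taylor h u * v with hW
  have hWrw : W = u * (taylor h v - v) - (taylor h u - u) * v := by rw [hW]; ring
  have hDvc := stmt7_delta_coeff h v l' hv hl'1
  have hl'0 : (l' : ℂ) ≠ 0 := by exact_mod_cast (by omega : l' ≠ 0)
  have hDvc0 : (taylor h v - v).coeff (l' - 1) ≠ 0 := by
    rw [hDvc]; exact mul_ne_zero (mul_ne_zero hl'0 hb0) hh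
  have hDvdeg : (taylor h v - v).natDegree = l' - 1 :=
    le_antisymm (stmt7_delta_deg_le h v l' hv hl'1) (le_natDegree_of_ne_zero hDvc0)
  have hDvlc : (taylor h v - v).leadingCoeff = l' * b * h := by
    rw [leadingCoeff, hDvdeg, hDvc]
  have h1 : (u * (taylor h v - v)).coeff (l + l' - 1) = a * (l' * b * h) := by
    have e : l + l' - 1 = u.natDegree + (taylor h v - v).natDegree := by
      rw [hu, hDvdeg]; omega
    rw [e, coeff_mul_degree_add_degree, hDvlc]
  have h1le : (u * (taylor h v - v)).natDegree ≤ l + l' - 1 := by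
    refine natDegree_mul_le.trans ?_
    rw [hu, hDvdeg]; omega
  have h2 : ((taylor h u - u) * v).coeff (l + l' - 1) = (l : ℂ) * a * h * b
      ∧ ((taylor h u - u) * v).natDegree ≤ l + l' - 1 := by
    rcases Nat.eq_zero_or_pos l with hl0 | hl1
    · have hDu : taylor h u - u = 0 := by
        have hC : u = C (u.coeff 0) := eq_C_of_natDegree_eq_zero (hu.trans (by omega))
        rw [hC, taylor_C, sub_self]
      rw [hDu, zero_mul]
      subst hl0
      simp
    · have hDuc := stmt7_delta_coeff h u l hu hl1
      have hl0' : (l : ℂ) ≠ 0 := by exact_mod_cast (by omega : l ≠ 0)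
      have hDuc0 : (taylor h u - u).coeff (l - 1) ≠ 0 := by
        rw [hDuc]; exact mul_ne_zero (mul_ne_zero hl0' ha0) hh
      have hDudeg : (taylor h u - u).natDegree = l - 1 :=
        le_antisymm (stmt7_delta_deg_le h u l hu hl1) (le_natDegree_of_ne_zero hDuc0)
      constructor
      · have e : l + l' - 1 = (taylor h u - u).natDegree + v.natDegree := by
          rw [hv, hDudeg]; omega
        rw [e, coeff_mul_degree_add_degree, leadingCoeff, hDudeg, hDuc]
      · refine natDegree_mul_le.trans ?_
        rw [hv, hDudeg]; omega
  have hWc : W.coeff (l + l' - 1) = ((l' : ℂ) - l) * (a * b * h) := by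
    rw [hWrw, coeff_sub, h1, h2.1]; ring
  have hWle : W.natDegree ≤ l + l' - 1 :=
    hWrw ▸ (natDegree_sub_le _ _).trans (max_le h1le h2.2)
  have hWc0 : W.coeff (l + l' - 1) ≠ 0 := by
    rw [hWc]
    refine mul_ne_zero (sub_ne_zero.mpr ?_) (mul_ne_zero (mul_ne_zero ha0 hb0) hh)
    exact_mod_cast (by omega : l' ≠ l)
  have hWdeg : W.natDegree = l + l' - 1 :=
    le_antisymm hWle (le_natDegree_of_ne_zero hWc0)
  have hW0 : W ≠ 0 := fun hzz => hWc0 (by simp [hzz])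
  -- the functional equation for the Wronskian
  set A : Polynomial ℂ := ∏ s, (X - C (z s)) with hA
  set Cp : Polynomial ℂ := ∏ s, (X + C ((Λ s : ℂ) * h - z s)) with hCp
  have hid : A * W = Cp * taylor (-h) W := by
    apply Polynomial.funext
    intro x
    have e1 := hequ x
    have e2 := heqv x
    simp only [hA, hCp, hW, eval_mul, eval_sub, eval_add, eval_prod, eval_X, eval_C,
      taylor_eval]
    have ex1 : x + -h + h = x := by ring
    have ex2 : x + -h = x - h := by ring
    rw [ex1, ex2]
    have ep : (∏ s, (x + ((Λ s : ℂ) * h - z s))) = ∏ s, (x - z s + (Λ s : ℂ) * h) :=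
      Finset.prod_congr rfl fun s _ => by ring
    rw [ep]
    linear_combination u.eval x * e2 - v.eval x * e1
  have hAm : A.Monic := monic_prod_of_monic _ _ fun s _ => monic_X_sub_C _
  have hCm : Cp.Monic := monic_prod_of_monic _ _ fun s _ => monic_X_add_C _
  set w := W.leadingCoeff with hw
  have hw0 : w ≠ 0 := leadingCoeff_ne_zero.mpr hW0
  set W₀ : Polynomial ℂ := W * C w⁻¹ with hW₀
  have hW₀m : W₀.Monic := monic_mul_leadingCoeff_inv hW0
  have hid0 : A * W₀ = Cp * taylor (-h) W₀ := by
    rw [hW₀, taylor_mul, taylor_C]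
    linear_combination hid * C w⁻¹
  have hdeg0 : W₀.natDegree = l + l' - 1 := by
    rw [hW₀, natDegree_mul_C (inv_ne_zero hw0), hWdeg]
  have hT0m : (taylor (-h) W₀).Monic := by
    unfold Polynomial.Monic
    rw [stmt7_taylor_lc]
    exact hW₀m
  have hnext : A.nextCoeff + W₀.nextCoeff = Cp.nextCoeff + (taylor (-h) W₀).nextCoeff := by
    rw [← Monic.nextCoeff_mul hAm hW₀m, ← Monic.nextCoeff_mul hCm hT0m, hid0]
  have hAn : A.nextCoeff = ∑ s, -(z s) := by
    rw [hA, Monic.nextCoeff_prod _ _ fun s _ => monic_X_sub_C _]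
    exact Finset.sum_congr rfl fun s _ => nextCoeff_X_sub_C _
  have hCn : Cp.nextCoeff = ∑ s, ((Λ s : ℂ) * h - z s) := by
    rw [hCp, Monic.nextCoeff_prod _ _ fun s _ => monic_X_add_C _]
    exact Finset.sum_congr rfl fun s _ => nextCoeff_X_add_C _
  have hTn : (taylor (-h) W₀).nextCoeff = W₀.nextCoeff - (l + l' - 1 : ℕ) * h := by
    rcases Nat.eq_zero_or_pos (l + l' - 1) with h0 | hpos
    · rw [h0]
      have d1 : (taylor (-h) W₀).natDegree = 0 := by rw [natDegree_taylor, hdeg0, h0]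
      have d2 : W₀.natDegree = 0 := by rw [hdeg0, h0]
      rw [nextCoeff, if_pos d1, nextCoeff, if_pos d2]
      simp
    · rw [nextCoeff_of_natDegree_pos (by rw [natDegree_taylor, hdeg0]; omega),
        nextCoeff_of_natDegree_pos (by rw [hdeg0]; omega),
        natDegree_taylor, hdeg0,
        stmt7_taylor_coeff_pred (-h) W₀ (l + l' - 1) hdeg0.le hpos]
      have : W₀.coeff (l + l' - 1) = 1 := by
        have := hW₀m.leadingCoeff
        rwa [leadingCoeff, hdeg0] at this
      rw [this]
      ring
  -- conclude
  have hsum : ∑ s, ((Λ s : ℂ) * h - z s) = ∑ s, -(z s) + h * ((∑ s, Λ s : ℕ) : ℂ) := by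
    push_cast
    rw [Finset.mul_sum, ← Finset.sum_add_distrib]
    exact Finset.sum_congr rfl fun s _ => by ring
  rw [hAn, hCn, hTn, hsum] at hnext
  have hfin : ((l + l' - 1 : ℕ) : ℂ) * h = h * ((∑ s, Λ s : ℕ) : ℂ) := by
    linear_combination hnext
  have : ((l + l' - 1 : ℕ) : ℂ) = ((∑ s, Λ s : ℕ) : ℂ) := by
    exact mul_right_cancel₀ hh (by linear_combination hfin)
  exact_mod_cast this

/-- if the difference equation `A(x)u(x+h)+B(x)u(x)+C(x)u(x-h)=0`
with `A(x)=∏(x-z_s)`, `C(x)=∏(x-z_s+Λ_s h)` has two linearly independent polynomial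
solutions of distinct degrees `l`, `l'`, then `l + l' - 1 = Λ_1 + ... + Λ_n`. -/
theorem stmt7 (h : ℂ) (hh : h ≠ 0) (n : ℕ) (z : Fin n → ℂ)
    (hz : Function.Injective z) (Λ : Fin n → ℕ) (hΛ : ∀ s, 1 ≤ Λ s)
    (B u v : Polynomial ℂ) (l l' : ℕ)
    (hu : u.natDegree = l) (hv : v.natDegree = l') (hll : l ≠ l')
    (hind : LinearIndependent ℂ ![u, v])
    (hequ : ∀ x : ℂ, (∏ s, (x - z s)) * u.eval (x + h)
      + B.eval x * u.eval x + (∏ s, (x - z s + Λ s * h)) * u.eval (x - h) = 0)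
    (heqv : ∀ x : ℂ, (∏ s, (x - z s)) * v.eval (x + h)
      + B.eval x * v.eval x + (∏ s, (x - z s + Λ s * h)) * v.eval (x - h) = 0) :
    l + l' - 1 = ∑ s, Λ s := by
  have hu0 : u ≠ 0 := by simpa using hind.ne_zero 0
  have hv0 : v ≠ 0 := by simpa using hind.ne_zero 1
  rcases lt_or_gt_of_ne hll with hlt | hgt
  · exact stmt7_key h hh n z Λ B u v l l' hu hv hlt hu0 hv0 hequ heqv
  · have := stmt7_key h hh n z Λ B v u l' l hv hu hgt hv0 hu0 heqv hequ
    omega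
end

section
/- Let u(x) = ∏_{i=1}^l (x - t_i) with distinct roots t_1, ..., t_l that satisfy t_i ≠ t_k ± h for i ≠ k, and let T(x) = ∏_{s=1}^n ∏_{i=1}^{Λ_s}(x - z_s + ih). Assume u(x) has no common roots with u(x+h) or T(x). If there exists a polynomial v(x) with u(x+h)v(x) - u(x)v(x+h) = T(x), then for each j = 1,...,l: ∏_{s=1}^n (t_j - z_s + Λ_s h)/(t_j - z_s) · ∏_{k≠j} (t_j - t_k - h)/(t_j - t_k + h) = 1, i.e., the roots of u form a solution of the sl_2 XXX Bethe equation. -/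
/-- if `u(x) = ∏ (x - t_i)` is generic and there is a polynomial `v`
with `u(x+h)v(x) - u(x)v(x+h) = T(x)`, then the roots of `u` satisfy the sl₂ XXX
Bethe equation. -/
theorem stmt9 (h : ℂ) (hh : h ≠ 0) (n l : ℕ) (z : Fin n → ℂ)
    (hz : Function.Injective z) (Λ : Fin n → ℕ) (hΛ : ∀ s, 1 ≤ Λ s)
    (t : Fin l → ℂ) (hinj : Function.Injective t)
    (hsep : ∀ i k, i ≠ k → t i ≠ t k + h ∧ t i ≠ t k - h)
    (T : ℂ → ℂ)
    (hT : T = fun x => ∏ s, ∏ i ∈ Finset.range (Λ s), (x - z s + (i + 1) * h))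
    (hTt : ∀ j, T (t j) ≠ 0)
    (u : Polynomial ℂ)
    (hu : u = ∏ i, (Polynomial.X - Polynomial.C (t i)))
    (v : Polynomial ℂ)
    (hw : ∀ x : ℂ, u.eval (x + h) * v.eval x - u.eval x * v.eval (x + h) = T x) :
    ∀ j, (∏ s, (t j - z s + Λ s * h) / (t j - z s))
        * ∏ k ∈ Finset.univ.erase j, (t j - t k - h) / (t j - t k + h) = 1 := by
  intro j
  set A : ℂ := ∏ k ∈ Finset.univ.erase j, (t j - t k + h) with hAdef
  set B : ℂ := ∏ k ∈ Finset.univ.erase j, (t j - t k - h) with hBdef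
  -- evaluations of u
  have heval : ∀ a : ℂ, u.eval a = ∏ i, (a - t i) := by
    intro a
    simp [hu, Polynomial.eval_prod]
  have hu0 : u.eval (t j) = 0 := by
    rw [heval]
    exact Finset.prod_eq_zero (Finset.mem_univ j) (by ring)
  have huA : u.eval (t j + h) = h * A := by
    rw [heval, ← Finset.mul_prod_erase _ _ (Finset.mem_univ j)]
    have h1 : t j + h - t j = h := by ring
    rw [h1, hAdef]
    congr 1
    exact Finset.prod_congr rfl fun k _ => by ring
  have huB : u.eval (t j - h) = (-h) * B := by
    rw [heval, ← Finset.mul_prod_erase _ _ (Finset.mem_univ j)]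
    have h1 : t j - h - t j = -h := by ring
    rw [h1, hBdef]
    congr 1
    exact Finset.prod_congr rfl fun k _ => by ring
  -- nonvanishing of A and B
  have hA0 : A ≠ 0 := by
    rw [hAdef, Finset.prod_ne_zero_iff]
    intro k hk
    have hkj : k ≠ j := (Finset.mem_erase.mp hk).1
    intro H
    exact (hsep j k (Ne.symm hkj)).2 (by linear_combination H)
  have hB0 : B ≠ 0 := by
    rw [hBdef, Finset.prod_ne_zero_iff]
    intro k hk
    have hkj : k ≠ j := (Finset.mem_erase.mp hk).1
    intro H
    exact (hsep j k (Ne.symm hkj)).1 (by linear_combination H)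
  -- the two key evaluations of the Wronskian identity
  have E1 : h * A * v.eval (t j) = T (t j) := by
    have := hw (t j)
    rw [hu0, huA] at this
    linear_combination this
  have E2 : h * B * v.eval (t j) = T (t j - h) := by
    have := hw (t j - h)
    rw [sub_add_cancel, hu0, huB] at this
    linear_combination this
  have hv0 : v.eval (t j) ≠ 0 := by
    intro H
    apply hTt j
    rw [← E1, H, mul_zero]
  have hTm0 : T (t j - h) ≠ 0 := by
    rw [← E2]
    exact mul_ne_zero (mul_ne_zero hh hB0) hv0
  -- each t j - z s is nonzero (it is a factor of T (t j - h))
  have hb0 : ∀ s, t j - z s ≠ 0 := by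
    intro s H
    apply hTm0
    rw [hT]
    apply Finset.prod_eq_zero (Finset.mem_univ s)
    apply Finset.prod_eq_zero (Finset.mem_range.mpr (hΛ s))
    push_cast
    linear_combination H
  have hY0 : (∏ s, (t j - z s)) ≠ 0 := Finset.prod_ne_zero_iff.mpr fun s _ => hb0 s
  -- telescoping identity
  have tel : ∀ (a : ℂ) (m : ℕ),
      (∏ i ∈ Finset.range m, (a - h + (↑i + 1) * h)) * (a + m * h)
        = (∏ i ∈ Finset.range m, (a + (↑i + 1) * h)) * a := by
    intro a m
    have h1 : ∀ i : ℕ, a - h + ((i : ℂ) + 1) * h = a + (i : ℂ) * h := fun i => by ring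
    have h2 : ∀ i : ℕ, a + ((i : ℂ) + 1) * h = a + ((i + 1 : ℕ) : ℂ) * h := fun i => by
      push_cast; ring
    rw [Finset.prod_congr rfl fun i _ => h1 i, Finset.prod_congr rfl fun i _ => h2 i,
      ← Finset.prod_range_succ (fun i => a + (i : ℂ) * h) m,
      Finset.prod_range_succ' (fun i => a + (i : ℂ) * h) m]
    push_cast
    ring
  have hTT : T (t j - h) * ∏ s, (t j - z s + Λ s * h) = T (t j) * ∏ s, (t j - z s) := by
    rw [hT]
    simp only
    rw [← Finset.prod_mul_distrib, ← Finset.prod_mul_distrib]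
    refine Finset.prod_congr rfl fun s _ => ?_
    have h1 : ∀ i : ℕ, t j - h - z s + ((i : ℂ) + 1) * h
        = t j - z s - h + ((i : ℂ) + 1) * h := fun i => by ring
    rw [Finset.prod_congr rfl fun i _ => h1 i]
    exact tel (t j - z s) (Λ s)
  -- combine everything
  have key : (∏ s, (t j - z s + Λ s * h)) * B = (∏ s, (t j - z s)) * A := by
    apply mul_left_cancel₀ (mul_ne_zero hh hv0)
    linear_combination hTT + (∏ s, (t j - z s + (Λ s : ℂ) * h)) * E2
      - (∏ s, (t j - z s)) * E1
  rw [Finset.prod_div_distrib, Finset.prod_div_distrib, ← hAdef, ← hBdef,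
    div_mul_div_comm, key, div_self (mul_ne_zero hY0 hA0)]
end

section
/- Let u(x) = ∏_{i=1}^l (x - t_i) be a polynomial with simple roots, generic with respect to the data (no common roots with u(x+h) and T(x)). If the roots t_1,...,t_l satisfy the sl_2 Bethe equation ∏_{s=1}^n (t_j - z_s + Λ_s h)/(t_j - z_s) · ∏_{k≠j}(t_j - t_k - h)/(t_j - t_k + h) = 1 for all j, then there exists a polynomial v(x) such that u(x+h)v(x) - u(x)v(x+h) = c·T(x) for some nonzero constant c, where T(x) = ∏_{s=1}^n ∏_{i=1}^{Λ_s}(x - z_s + ih). -/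
open Polynomial Finset

/-- If `p` vanishes at `m` distinct points, the product of the corresponding
linear factors divides `p`. -/
lemma aux_prod_X_sub_C_dvd {ι : Type*} [Fintype ι] (r : ι → ℂ) (hr : Function.Injective r)
    (p : Polynomial ℂ) (hp : ∀ i, p.eval (r i) = 0) :
    (∏ i, (X - C (r i))) ∣ p := by
  rcases eq_or_ne p 0 with rfl | hp0
  · exact dvd_zero _
  have hle : (Finset.univ.val.map r) ≤ p.roots := by
    rw [Multiset.le_iff_subset (Multiset.Nodup.map hr Finset.univ.nodup)]
    intro a ha
    obtain ⟨i, _, rfl⟩ := Multiset.mem_map.1 ha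
    exact (Polynomial.mem_roots hp0).2 (hp i)
  have hdvd := (Multiset.prod_X_sub_C_dvd_iff_le_roots hp0 (Finset.univ.val.map r)).2 hle
  have heq : (∏ i, (X - C (r i)))
      = (Multiset.map (fun a => X - C a) (Multiset.map r Finset.univ.val)).prod := by
    rw [Multiset.map_map, Finset.prod_eq_multiset_prod]
    rfl
  rw [heq]; exact hdvd

/-- The difference operator `q ↦ q - q(· + h)` is surjective on polynomials. -/
lemma aux_exists_delta (h : ℂ) (hh : h ≠ 0) :
    ∀ d : ℕ, ∀ p : Polynomial ℂ, p.natDegree ≤ d →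
      ∃ q : Polynomial ℂ, q - q.comp (X + C h) = p := by
  intro d
  induction d using Nat.strong_induction_on with
  | _ d IH =>
    intro p hpd
    rcases eq_or_ne p 0 with rfl | hp0
    · exact ⟨0, by simp⟩
    set e := p.natDegree with he
    have he1 : ((e : ℂ) + 1) ≠ 0 := by
      intro hc
      have : ((e + 1 : ℕ) : ℂ) = 0 := by push_cast; linear_combination hc
      exact Nat.succ_ne_zero e (by exact_mod_cast this)
    have heh : ((e : ℂ) + 1) * h ≠ 0 := mul_ne_zero he1 hh
    set a := -(p.leadingCoeff) / (((e : ℂ) + 1) * h) with ha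
    set s : Polynomial ℂ := C a * (X ^ (e+1) - (X + C h) ^ (e+1)) with hs
    have hscoeff : ∀ k, s.coeff k =
        a * ((X ^ (e+1) : Polynomial ℂ).coeff k - ((X + C h) ^ (e+1)).coeff k) := by
      intro k; simp [hs, coeff_C_mul, mul_sub]
    have hsdeg : s.natDegree ≤ e := by
      apply natDegree_le_iff_coeff_eq_zero.2
      intro m hm
      rw [hscoeff m, coeff_X_add_C_pow]
      rcases eq_or_lt_of_le (Nat.succ_le_of_lt hm) with hme | hme
      · rw [coeff_X_pow, if_pos hme.symm, ← hme]
        simp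
      · rw [coeff_X_pow, if_neg (by omega), Nat.choose_eq_zero_of_lt hme]
        simp
    have hse : s.coeff e = p.leadingCoeff := by
      have h1 : (X ^ (e+1) : Polynomial ℂ).coeff e = 0 := by
        rw [coeff_X_pow]; simp
      have h2 : ((X + C h) ^ (e+1)).coeff e = h * ((e : ℂ) + 1) := by
        rw [coeff_X_add_C_pow]
        have h3 : e + 1 - e = 1 := by omega
        rw [h3, Nat.choose_succ_self_right, pow_one]
        push_cast; ring
      rw [hscoeff e, h1, h2, ha, zero_sub, div_mul_eq_mul_div, div_eq_iff heh]
      ring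
    have hscomp : s = C a * X ^ (e+1) - (C a * X ^ (e+1)).comp (X + C h) := by
      simp [hs, mul_sub]
    set r := p - s with hr
    have hrdeg : r.natDegree ≤ e := le_trans (natDegree_sub_le p s) (by simp [hsdeg, ← he])
    have hrce : r.coeff e = 0 := by
      rw [hr, coeff_sub, hse, he, coeff_natDegree, sub_self]
    obtain ⟨q', hq'⟩ : ∃ q' : Polynomial ℂ, q' - q'.comp (X + C h) = r := by
      rcases eq_or_ne r 0 with hr0 | hr0
      · exact ⟨0, by simp [hr0]⟩
      · have hne : r.natDegree ≠ e := by
          intro hre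
          exact hr0 (leadingCoeff_eq_zero.mp (by rw [Polynomial.leadingCoeff, hre]; exact hrce))
        exact IH r.natDegree (lt_of_lt_of_le (lt_of_le_of_ne hrdeg hne) hpd) r le_rfl
    refine ⟨C a * X ^ (e+1) + q', ?_⟩
    rw [add_comp]
    have hfin : C a * X ^ (e + 1) + q' - ((C a * X ^ (e + 1)).comp (X + C h) + q'.comp (X + C h))
        = s + (q' - q'.comp (X + C h)) := by rw [hscomp]; ring
    rw [hfin, hq', hr]; ring

lemma aux_telescope (a hc : ℂ) (m : ℕ) :
    (∏ i ∈ Finset.range m, (a + ((i : ℂ) + 1) * hc)) * a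
      = (∏ i ∈ Finset.range m, (a + (i : ℂ) * hc)) * (a + (m : ℂ) * hc) := by
  have l1 : (∏ i ∈ Finset.range (m+1), (a + (i : ℂ) * hc))
      = (∏ i ∈ Finset.range m, (a + ((i : ℂ) + 1) * hc)) * a := by
    rw [Finset.prod_range_succ']
    congr 1
    · exact Finset.prod_congr rfl fun i _ => by push_cast; ring
    · simp
  rw [← l1, Finset.prod_range_succ]

/-- if `u(x) = ∏ (x - t_i)` is generic and its roots satisfy the sl₂
Bethe equation, then there is a polynomial `v` with
`u(x+h)v(x) - u(x)v(x+h) = c·T(x)` for some nonzero constant `c`. -/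
theorem stmt10 (h : ℂ) (hh : h ≠ 0) (n l : ℕ) (z : Fin n → ℂ)
    (hz : Function.Injective z) (Λ : Fin n → ℕ) (hΛ : ∀ s, 1 ≤ Λ s)
    (t : Fin l → ℂ) (hinj : Function.Injective t)
    (hsep : ∀ i k, i ≠ k → t i ≠ t k + h ∧ t i ≠ t k - h)
    (T : ℂ → ℂ)
    (hT : T = fun x => ∏ s, ∏ i ∈ Finset.range (Λ s), (x - z s + (i + 1) * h))
    (hTt : ∀ j, T (t j) ≠ 0)
    (u : Polynomial ℂ)
    (hu : u = ∏ i, (Polynomial.X - Polynomial.C (t i)))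
    (hBethe : ∀ j, (∏ s, (t j - z s + Λ s * h) / (t j - z s))
        * ∏ k ∈ Finset.univ.erase j, (t j - t k - h) / (t j - t k + h) = 1) :
    ∃ (v : Polynomial ℂ) (c : ℂ), c ≠ 0 ∧
      ∀ x : ℂ, u.eval (x + h) * v.eval x - u.eval x * v.eval (x + h) = c * T x := by
  classical
  -- basic evaluation facts
  have hueval : ∀ x, u.eval x = ∏ k, (x - t k) := by
    intro x; simp [hu, eval_prod]
  set U : Fin l → Polynomial ℂ := fun j => ∏ k ∈ Finset.univ.erase j, (X - C (t k)) with hU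
  have hUeval : ∀ j x, (U j).eval x = ∏ k ∈ Finset.univ.erase j, (x - t k) := by
    intro j x; simp [hU, eval_prod]
  have hut : ∀ j, u.eval (t j) = 0 := by
    intro j; rw [hueval]
    exact Finset.prod_eq_zero (Finset.mem_univ j) (sub_self _)
  have hUt : ∀ j k, j ≠ k → (U k).eval (t j) = 0 := by
    intro j k hjk; rw [hUeval]
    exact Finset.prod_eq_zero (Finset.mem_erase.2 ⟨hjk, Finset.mem_univ j⟩) (sub_self _)
  have hU0 : ∀ j, (U j).eval (t j) ≠ 0 := by
    intro j; rw [hUeval]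
    refine Finset.prod_ne_zero_iff.2 fun k hk => sub_ne_zero.2 fun hc => ?_
    exact (Finset.mem_erase.1 hk).1 (hinj hc.symm)
  have huh0 : ∀ j, u.eval (t j + h) ≠ 0 := by
    intro j; rw [hueval]
    refine Finset.prod_ne_zero_iff.2 fun k _ => fun hc => ?_
    rcases eq_or_ne k j with rfl | hkj
    · exact hh (by linear_combination hc)
    · exact (hsep k j hkj).1 (by linear_combination -hc)
  -- the key consequence of the Bethe equations
  have hkey : ∀ j, T (t j) * u.eval (t j - h) + T (t j - h) * u.eval (t j + h) = 0 := by
    intro j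
    have h1 := hBethe j
    have hfrac : ∀ s : Fin n, (t j - z s + Λ s * h) / (t j - z s) ≠ 0 := by
      intro s hs0
      have h0 : (∏ s, (t j - z s + Λ s * h) / (t j - z s)) = 0 :=
        Finset.prod_eq_zero (Finset.mem_univ s) hs0
      rw [h0, zero_mul] at h1; exact one_ne_zero h1.symm
    have hB0 : ∀ s : Fin n, t j - z s ≠ 0 := fun s hs0 => hfrac s (by rw [hs0, div_zero])
    have hA0 : ∀ s : Fin n, t j - z s + Λ s * h ≠ 0 := fun s hs0 => hfrac s (by rw [hs0, zero_div])
    have hD0 : ∀ k ∈ Finset.univ.erase j, t j - t k + h ≠ 0 := by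
      intro k hk h0
      exact (hsep k j (Finset.mem_erase.1 hk).1).1 (by linear_combination -h0)
    have hprodA : (∏ s, (t j - z s + Λ s * h)) ≠ 0 :=
      Finset.prod_ne_zero_iff.2 fun s _ => hA0 s
    have hprodB : (∏ s, (t j - z s)) ≠ 0 :=
      Finset.prod_ne_zero_iff.2 fun s _ => hB0 s
    have hprodD : (∏ k ∈ Finset.univ.erase j, (t j - t k + h)) ≠ 0 :=
      Finset.prod_ne_zero_iff.2 hD0
    rw [Finset.prod_div_distrib, Finset.prod_div_distrib, div_mul_div_comm] at h1
    have hAC : (∏ s, (t j - z s + Λ s * h)) * (∏ k ∈ Finset.univ.erase j, (t j - t k - h))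
        = (∏ s, (t j - z s)) * (∏ k ∈ Finset.univ.erase j, (t j - t k + h)) := by
      field_simp [hprodB, hprodD] at h1
      exact h1
    -- telescoping identity
    have hTel : T (t j) * (∏ s, (t j - z s))
        = T (t j - h) * (∏ s, (t j - z s + Λ s * h)) := by
      simp only [hT]
      rw [← Finset.prod_mul_distrib, ← Finset.prod_mul_distrib]
      refine Finset.prod_congr rfl fun s _ => ?_
      have e1 : (∏ i ∈ Finset.range (Λ s), (t j - h - z s + ((i:ℂ) + 1) * h))
          = ∏ i ∈ Finset.range (Λ s), (t j - z s + (i:ℂ) * h) :=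
        Finset.prod_congr rfl fun i _ => by ring
      rw [e1]
      exact aux_telescope (t j - z s) h (Λ s)
    -- combine
    have hTCD : T (t j) * (∏ k ∈ Finset.univ.erase j, (t j - t k - h))
        = T (t j - h) * (∏ k ∈ Finset.univ.erase j, (t j - t k + h)) := by
      apply mul_right_cancel₀ (mul_ne_zero hprodA hprodB)
      linear_combination (∏ k ∈ Finset.univ.erase j, (t j - t k - h)) * (∏ s, (t j - z s + Λ s * h)) * hTel
        + T (t j - h) * (∏ s, (t j - z s + Λ s * h)) * hAC
    have hud : u.eval (t j - h) = -h * (∏ k ∈ Finset.univ.erase j, (t j - t k - h)) := by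
      rw [hueval, ← Finset.mul_prod_erase Finset.univ _ (Finset.mem_univ j)]
      rw [Finset.prod_congr rfl (fun k _ => show t j - h - t k = t j - t k - h by ring)]
      ring
    have huu : u.eval (t j + h) = h * (∏ k ∈ Finset.univ.erase j, (t j - t k + h)) := by
      rw [hueval, ← Finset.mul_prod_erase Finset.univ _ (Finset.mem_univ j)]
      rw [Finset.prod_congr rfl (fun k _ => show t j + h - t k = t j - t k + h by ring)]
      ring
    rw [hud, huu]
    linear_combination (-h) * hTCD
  -- the coefficients of the partial-fraction expansion
  set Acoef : Fin l → ℂ := fun j => T (t j) / ((U j).eval (t j) * u.eval (t j + h)) with hAcoef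
  set Tp : Polynomial ℂ :=
    ∏ s, ∏ i ∈ Finset.range (Λ s), (X - C (z s) + C (((i:ℂ) + 1) * h)) with hTp
  have hTpe : ∀ x, Tp.eval x = T x := by
    intro x; rw [hT, hTp]; simp [eval_prod]
  set uh : Polynomial ℂ := u.comp (X + C h) with huh
  have huhe : ∀ x, uh.eval x = u.eval (x + h) := by
    intro x; rw [huh]; simp [eval_comp]
  set P : Polynomial ℂ :=
    Tp - ∑ j, C (Acoef j) * (uh * U j - u * (U j).comp (X + C h)) with hP
  have hPeval : ∀ x, P.eval x
      = T x - ∑ j, Acoef j * (u.eval (x + h) * (U j).eval x - u.eval x * (U j).eval (x + h)) := by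
    intro x
    rw [hP, eval_sub, hTpe, eval_finset_sum]
    congr 1
    refine Finset.sum_congr rfl fun j _ => ?_
    simp only [eval_mul, eval_sub, eval_C, eval_comp, eval_add, eval_X, huhe]
  have hProot1 : ∀ j, P.eval (t j) = 0 := by
    intro j
    rw [hPeval, Finset.sum_eq_single j
      (fun k _ hk => by rw [hut j, hUt j k (Ne.symm hk)]; ring)
      (fun hj => absurd (Finset.mem_univ j) hj)]
    rw [hut j, hAcoef]
    field_simp [hU0 j, huh0 j]
    ring
  have hProot2 : ∀ j, P.eval (t j - h) = 0 := by
    intro j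
    have hsub : t j - h + h = t j := by ring
    rw [hPeval, hsub, Finset.sum_eq_single j
      (fun k _ hk => by rw [hut j, hUt j k (Ne.symm hk)]; ring)
      (fun hj => absurd (Finset.mem_univ j) hj)]
    rw [hut j, hAcoef]
    field_simp [hU0 j, huh0 j]
    linear_combination ((U j).eval (t j)) * hkey j
  -- divisibility by u(x)·u(x+h)
  set rr : Fin l ⊕ Fin l → ℂ := Sum.elim t (fun k => t k - h) with hrr
  have hrinj : Function.Injective rr := by
    intro i1 i2 hi
    rcases i1 with a | a <;> rcases i2 with b | b <;> simp only [hrr, Sum.elim_inl, Sum.elim_inr] at hi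
    · exact congrArg Sum.inl (hinj hi)
    · rcases eq_or_ne a b with rfl | hab
      · exact absurd (by linear_combination hi) hh
      · exact absurd (by linear_combination hi : t a = t b - h) (hsep a b hab).2
    · rcases eq_or_ne b a with rfl | hab
      · exact absurd (by linear_combination -hi) hh
      · exact absurd (by linear_combination -hi : t b = t a - h) (hsep b a hab).2
    · exact congrArg Sum.inr (hinj (by linear_combination hi))
  have hprod : u * uh = ∏ i, (X - C (rr i)) := by
    rw [Fintype.prod_sum_type]
    have h1 : (∏ a : Fin l, (X - C (rr (Sum.inl a)))) = u := by
      rw [hu]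
      exact Finset.prod_congr rfl fun k _ => by simp [hrr]
    have h2 : (∏ a : Fin l, (X - C (rr (Sum.inr a)))) = uh := by
      rw [huh, hu, Polynomial.prod_comp]
      refine Finset.prod_congr rfl fun k _ => ?_
      simp only [hrr, Sum.elim_inr, sub_comp, X_comp, C_comp, map_sub]
      ring
    rw [h1, h2]
  have hdvd : u * uh ∣ P := by
    rw [hprod]
    apply aux_prod_X_sub_C_dvd rr hrinj
    intro i
    rcases i with j | j
    · simpa [hrr] using hProot1 j
    · simpa [hrr] using hProot2 j
  obtain ⟨pp, hpp⟩ := hdvd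
  obtain ⟨q, hq⟩ := aux_exists_delta h hh pp.natDegree pp le_rfl
  refine ⟨(∑ j, C (Acoef j) * U j) + u * q, 1, one_ne_zero, ?_⟩
  intro x
  have hvx : ∀ y : ℂ, (((∑ j, C (Acoef j) * U j) + u * q)).eval y
      = (∑ j, Acoef j * (U j).eval y) + u.eval y * q.eval y := by
    intro y; simp [eval_finset_sum]
  rw [hvx x, hvx (x + h)]
  have hqx : q.eval x - q.eval (x + h) = pp.eval x := by
    have h2 := congrArg (Polynomial.eval x) hq
    simpa [eval_comp] using h2
  have hPx : P.eval x = u.eval x * (u.eval (x + h) * pp.eval x) := by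
    rw [hpp]
    simp [eval_mul, huhe, mul_assoc]
  have hPex := hPeval x
  have hsum : (∑ j, Acoef j * (u.eval (x + h) * (U j).eval x - u.eval x * (U j).eval (x + h)))
      = u.eval (x + h) * (∑ j, Acoef j * (U j).eval x)
        - u.eval x * (∑ j, Acoef j * (U j).eval (x + h)) := by
    rw [Finset.mul_sum, Finset.mul_sum, ← Finset.sum_sub_distrib]
    exact Finset.sum_congr rfl fun j _ => by ring
  linear_combination hPex - hsum + (u.eval x * u.eval (x + h)) * hqx - hPx
end

section
/- Let V be an (N+1)-dimensional space of complex polynomials without base points (for every z ∈ ℂ there is v ∈ V with v(z) ≠ 0). Let U_i(x) be the monic greatest common divisor of the family of discrete Wronskians {W(u_1,...,u_i) : u_1,...,u_i ∈ V}. Then there is a unique sequence of monic polynomials T_1(x),...,T_N(x) such that U_i(x) = ∏_{s=1}^{i-1} ∏_{j=1}^{i-s} T_s(x+(j-1)h) for all i = 1,...,N+1. -/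
/-
Set `U₀ = 1`. The product formula for `U₁, …, U_{N+1}` is equivalent to the recurrence
`T_s(x) U_{s+1}(x) U_{s+1}(x+h) = U_{s+2}(x) U_s(x+h)` together with `U₁ = 1`, and the recurrence
determines the `T_s`. So the theorem amounts to `U₁ = 1`, which holds because `V` has no base
points, and to the divisibility `U_{s+1}(x) U_{s+1}(x+h) ∣ U_{s+2}(x) U_s(x+h)`.

For the divisibility, apply the Desnanot–Jacobi identity to the discrete Wronskian matrix of a
tuple `v = (v₀, …, v_{s+1})` with inner part `v' = (v₁, …, v_s)`, upper part `v↑ = (v₁, …, v_{s+1})`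
and lower part `v↓ = (v₀, …, v_s)`:
`W(v)(x) W(v')(x+h) = W(v↑)(x+h) W(v↓)(x) - W(v↑)(x) W(v↓)(x+h)`.
The right side is divisible by `U_{s+1}(x) U_{s+1}(x+h)`. Given a point `z`, a generic tuple
`v` from `V` makes `W(v)` vanish at `z` exactly to the order of `U_{s+2}`, and `W(v')` vanish at
`z + h` exactly to the order of `U_s`; comparing root multiplicities at `z` gives the claim.
-/

/-- Discrete Wronskian of a tuple of polynomials, as a polynomial. -/
noncomputable def DWpoly (h : ℂ) {s : ℕ} (g : Fin s → Polynomial ℂ) : Polynomial ℂ :=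
  Matrix.det (Matrix.of fun i j : Fin s =>
    (g i).comp (Polynomial.X + Polynomial.C ((j : ℕ) * h)))

namespace Matrix

variable {K : Type*} [Field K] {ι : Type*} [Fintype ι] [DecidableEq ι]

def borderSubmatrix {α : Type*} (A : Matrix (ι ⊕ Fin 2) (ι ⊕ Fin 2) α) (i j : Fin 2) :
    Matrix (ι ⊕ Fin 1) (ι ⊕ Fin 1) α :=
  A.submatrix (Sum.map id fun _ => i) (Sum.map id fun _ => j)

theorem det_mul_det_toBlocks₁₁ (A : Matrix (ι ⊕ Fin 2) (ι ⊕ Fin 2) K)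
    (hE : A.toBlocks₁₁.det ≠ 0) :
    A.det * A.toBlocks₁₁.det =
      (A.borderSubmatrix 0 0).det * (A.borderSubmatrix 1 1).det -
        (A.borderSubmatrix 0 1).det * (A.borderSubmatrix 1 0).det := by
  have : Invertible A.toBlocks₁₁ := invertibleOfIsUnitDet _ (isUnit_iff_ne_zero.mpr hE)
  have schur : ∀ {o : Type} [Fintype o] [DecidableEq o] (B : Matrix (ι ⊕ o) (ι ⊕ o) K)
      [Invertible B.toBlocks₁₁], B.det = B.toBlocks₁₁.det *
        (B.toBlocks₂₂ - B.toBlocks₂₁ * ⅟B.toBlocks₁₁ * B.toBlocks₁₂).det := fun B _ => by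
    conv_lhs => rw [← fromBlocks_toBlocks B]
    exact det_fromBlocks₁₁ _ _ _ _
  set S := A.toBlocks₂₂ - A.toBlocks₂₁ * ⅟A.toBlocks₁₁ * A.toBlocks₁₂
  have border : ∀ i j, (A.borderSubmatrix i j).det = A.toBlocks₁₁.det * S i j := fun i j => by
    let : Invertible (A.borderSubmatrix i j).toBlocks₁₁ := this
    rw [schur (A.borderSubmatrix i j), det_fin_one]
    rfl
  rw [schur A, det_fin_two, border, border, border, border]
  ring

theorem det_submatrix_mul_det_submatrix {R m n : Type*} [CommRing R] [Fintype m] [DecidableEq m]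
    [Fintype n] [DecidableEq n] (M N : Matrix m m R) (e f : n ≃ m) :
    (M.submatrix e f).det * (N.submatrix f e).det = M.det * N.det := by
  rw [← det_mul, submatrix_mul_equiv, det_submatrix_equiv_self, det_mul]

theorem desnanot_jacobi_of_field {n : ℕ} (M : Matrix (Fin (n + 2)) (Fin (n + 2)) K)
    (hE : (M.submatrix (fun k : Fin n => k.castSucc.succ) fun k => k.castSucc.succ).det ≠ 0) :
    M.det * (M.submatrix (fun k : Fin n => k.castSucc.succ) fun k => k.castSucc.succ).det =
      (M.submatrix Fin.succ Fin.succ).det * (M.submatrix Fin.castSucc Fin.castSucc).det -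
        (M.submatrix Fin.succ Fin.castSucc).det * (M.submatrix Fin.castSucc Fin.succ).det := by
  -- `e` sends the block `Fin n` to the inner indices `1, …, n`, and the border indices `0, 1`
  -- to `n + 1` and `0`.
  let e : Fin n ⊕ Fin 2 ≃ Fin (n + 2) := finSumFinEquiv.trans (finRotate _)
  let g : Fin n ⊕ Fin 1 ≃ Fin (n + 1) := finSumFinEquiv
  let g' : Fin n ⊕ Fin 1 ≃ Fin (n + 1) := finSumFinEquiv.trans (finRotate _)
  have hinner : (fun k : Fin n => k.castSucc.succ) = e ∘ Sum.inl := by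
    funext k; ext; simp (disch := omega) [e, Fin.val_add, Nat.mod_eq_of_lt]
  have hsucc : Fin.succ ∘ g = e ∘ Sum.map id fun _ => 0 := by
    funext x
    rcases x with k | i <;> ext <;> simp (disch := omega) [e, g, Fin.val_add, Nat.mod_eq_of_lt]
  have hcast : Fin.castSucc ∘ g' = e ∘ Sum.map id fun _ => 1 := by
    funext x
    rcases x with k | i <;> ext <;> simp (disch := omega) [e, g', Fin.val_add, Nat.mod_eq_of_lt]
  set A := M.submatrix e e
  have hA : A.toBlocks₁₁ =
      M.submatrix (fun k : Fin n => k.castSucc.succ) fun k => k.castSucc.succ := by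
    rw [hinner]; rfl
  rw [← hA] at hE ⊢
  rw [← det_submatrix_equiv_self g (M.submatrix Fin.succ Fin.succ),
    ← det_submatrix_equiv_self g' (M.submatrix Fin.castSucc Fin.castSucc),
    ← det_submatrix_mul_det_submatrix (M.submatrix Fin.succ Fin.castSucc)
      (M.submatrix Fin.castSucc Fin.succ) g g',
    ← det_submatrix_equiv_self e M]
  simp only [submatrix_submatrix, hsucc, hcast]
  exact det_mul_det_toBlocks₁₁ A hE

theorem desnanot_jacobi {R : Type*} [CommRing R] [IsDomain R] {n : ℕ}
    (M : Matrix (Fin (n + 2)) (Fin (n + 2)) R)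
    (hE : (M.submatrix (fun k : Fin n => k.castSucc.succ) fun k => k.castSucc.succ).det ≠ 0) :
    M.det * (M.submatrix (fun k : Fin n => k.castSucc.succ) fun k => k.castSucc.succ).det =
      (M.submatrix Fin.succ Fin.succ).det * (M.submatrix Fin.castSucc Fin.castSucc).det -
        (M.submatrix Fin.succ Fin.castSucc).det * (M.submatrix Fin.castSucc Fin.succ).det := by
  let φ := algebraMap R (FractionRing R)
  have hφ : Function.Injective φ := IsFractionRing.injective R (FractionRing R)
  have hdet : ∀ {m : ℕ} (N : Matrix (Fin m) (Fin m) R), (N.map φ).det = φ N.det :=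
    fun N => (RingHom.map_det φ N).symm
  apply hφ
  have := desnanot_jacobi_of_field (M.map φ) (by
    rwa [submatrix_map, hdet, ne_eq, map_eq_zero_iff φ hφ])
  simpa only [submatrix_map, hdet, map_mul, map_sub] using this

end Matrix

open Matrix Polynomial Finset

theorem exists_eval_eq_det_add_smul {R S n : Type*} [CommRing R] [CommRing S] [Algebra R S]
    [Fintype n] [DecidableEq n] (ℓ : S →ₗ[R] R) (A B : Matrix n n S) :
    ∃ F : R[X], ∀ τ : R, F.eval τ = ℓ (A + τ • B).det := by
  have eval_poly : ∀ P : S[X], ∃ F : R[X], ∀ τ : R,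
      F.eval τ = ℓ (P.eval (algebraMap R S τ)) := by
    intro P
    induction P using Polynomial.induction_on' with
    | add p q hp hq =>
      obtain ⟨F, hF⟩ := hp
      obtain ⟨G, hG⟩ := hq
      exact ⟨F + G, fun τ => by simp [hF, hG]⟩
    | monomial k c =>
      refine ⟨C (ℓ c) * X ^ k, fun τ => ?_⟩
      rw [eval_monomial, ← map_pow, ← Algebra.commutes, ← Algebra.smul_def, map_smul,
        smul_eq_mul, eval_mul, eval_C, eval_X_pow, mul_comm]
  obtain ⟨F, hF⟩ := eval_poly (A.map C + (X : S[X]) • B.map C).det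
  refine ⟨F, fun τ => ?_⟩
  rw [hF, ← coe_evalRingHom, RingHom.map_det]
  congr 2
  ext i j
  simp only [RingHom.mapMatrix_apply, Matrix.map_apply, Matrix.add_apply, Matrix.smul_apply,
    coe_evalRingHom, eval_add, smul_eq_mul, eval_mul, eval_X, eval_C]
  rw [Algebra.smul_def]

section Taylor

variable {R : Type*} [CommRing R]

theorem rootMultiplicity_comp_X_add_C (p : R[X]) (a z : R) :
    rootMultiplicity z (p.comp (X + C a)) = rootMultiplicity (z + a) p := by
  simpa using rootMultiplicity_comp_C_mul_X_add_C p 1 a z isUnit_one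

theorem coeff_taylor_rootMultiplicity_ne_zero {p : R[X]} (hp : p ≠ 0) (z : R) :
    (taylor z p).coeff (rootMultiplicity z p) ≠ 0 := by
  rw [rootMultiplicity_eq_natTrailingDegree, ← taylor_apply]
  exact mt trailingCoeff_eq_zero.mp (mt (taylor_eq_zero z p).mp hp)

theorem coeff_taylor_eq_zero_of_pow_dvd {p : R[X]} {z : R} {b : ℕ}
    (hp : (X - C z) ^ (b + 1) ∣ p) : (taylor z p).coeff b = 0 := by
  obtain ⟨q, rfl⟩ := hp
  simp [taylor_mul, taylor_pow, coeff_X_pow_mul']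

end Taylor

section DiscreteWronskian

variable (h : ℂ)

noncomputable def DWmatrix {s : ℕ} (g : Fin s → ℂ[X]) : Matrix (Fin s) (Fin s) ℂ[X] :=
  Matrix.of fun i j => (g i).comp (X + C ((j : ℕ) * h))

theorem det_DWmatrix {s : ℕ} (g : Fin s → ℂ[X]) : (DWmatrix h g).det = DWpoly h g := rfl

theorem DWmatrix_add_smul {s : ℕ} (u w : Fin s → ℂ[X]) (τ : ℂ) :
    DWmatrix h (u + τ • w) = DWmatrix h u + τ • DWmatrix h w :=
  Matrix.ext fun i j => by simp [DWmatrix, add_comp, smul_comp]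

theorem DWpoly_smul {s : ℕ} (u : Fin s → ℂ[X]) (τ : ℂ) :
    DWpoly h (τ • u) = τ ^ s • DWpoly h u := by
  have : DWmatrix h (τ • u) = τ • DWmatrix h u :=
    Matrix.ext fun i j => by simp [DWmatrix, smul_comp]
  rw [← det_DWmatrix, ← det_DWmatrix, this, det_smul_of_tower, Fintype.card_fin]

theorem DWpoly_submatrix {s m : ℕ} (g : Fin s → ℂ[X]) (r c : Fin m → Fin s) (d : ℕ)
    (hc : ∀ j, (c j : ℕ) = j + d) :
    ((DWmatrix h g).submatrix r c).det = (DWpoly h (g ∘ r)).comp (X + C (d * h)) := by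
  rw [← det_DWmatrix, ← coe_compRingHom_apply, RingHom.map_det, RingHom.mapMatrix_apply]
  congr 1
  refine Matrix.ext fun i j => ?_
  simp only [DWmatrix, submatrix_apply, of_apply, map_apply, coe_compRingHom_apply, comp_assoc,
    add_comp, X_comp, C_comp, Function.comp_apply, hc]
  congr 1
  rw [add_assoc, ← C_add]
  congr 2
  push_cast
  ring

theorem DWpoly_mul_DWpoly_comp {n : ℕ} (v : Fin (n + 2) → ℂ[X])
    (hmid : DWpoly h (fun k : Fin n => v k.castSucc.succ) ≠ 0) :
    DWpoly h v * (DWpoly h fun k : Fin n => v k.castSucc.succ).comp (X + C h) =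
      (DWpoly h (v ∘ Fin.succ)).comp (X + C h) * DWpoly h (v ∘ Fin.castSucc) -
        DWpoly h (v ∘ Fin.succ) * (DWpoly h (v ∘ Fin.castSucc)).comp (X + C h) := by
  have := desnanot_jacobi (DWmatrix h v) (by
    rwa [DWpoly_submatrix h v _ _ 1 (fun j => by simp), Ne, comp_X_add_C_eq_zero_iff])
  rw [DWpoly_submatrix h v _ _ 1 (fun j => by simp), DWpoly_submatrix h v _ _ 1 (fun j => by simp),
    DWpoly_submatrix h v _ _ 0 (fun j => by simp), DWpoly_submatrix h v _ _ 0 (fun j => by simp),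
    DWpoly_submatrix h v _ _ 1 (fun j => by simp)] at this
  simpa [Function.comp_def, det_DWmatrix] using this

theorem mul_comp_dvd_DWpoly_mul {n : ℕ} {D : ℂ[X]} (v : Fin (n + 2) → ℂ[X])
    (hs : D ∣ DWpoly h (v ∘ Fin.succ)) (hc : D ∣ DWpoly h (v ∘ Fin.castSucc)) :
    D * D.comp (X + C h) ∣
      DWpoly h v * (DWpoly h fun k : Fin n => v k.castSucc.succ).comp (X + C h) := by
  rcases eq_or_ne (DWpoly h fun k : Fin n => v k.castSucc.succ) 0 with hmid | hmid
  · rw [hmid, zero_comp, mul_zero]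
    exact dvd_zero _
  have comp_dvd : ∀ {p q : ℂ[X]}, p ∣ q → p.comp (X + C h) ∣ q.comp (X + C h) := fun hpq => by
    simpa only [coe_compRingHom_apply] using map_dvd (compRingHom (X + C h)) hpq
  rw [DWpoly_mul_DWpoly_comp h v hmid]
  refine dvd_sub ?_ (mul_dvd_mul hs (comp_dvd hc))
  rw [mul_comm D]
  exact mul_dvd_mul (comp_dvd hs) hc

theorem finite_setOf_pow_dvd_DWpoly_add_smul (z : ℂ) (a : ℕ) {s : ℕ} (u w : Fin s → ℂ[X])
    (hu : ¬ (X - C z) ^ (a + 1) ∣ DWpoly h u) :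
    {τ : ℂ | (X - C z) ^ (a + 1) ∣ DWpoly h (u + τ • w)}.Finite := by
  have hu0 : DWpoly h u ≠ 0 := fun h0 => hu (h0 ▸ dvd_zero _)
  set b := rootMultiplicity z (DWpoly h u)
  have hba : b ≤ a := (rootMultiplicity_le_iff hu0 z a).mpr hu
  -- The `b`-th Taylor coefficient at `z` of `DWpoly h (u + τ • w)` is a polynomial `F` in `τ`,
  -- nonzero at `τ = 0`, and every `τ` of the set is a root of `F`.
  obtain ⟨F, hF⟩ := exists_eval_eq_det_add_smul ((lcoeff ℂ b).comp (taylor z))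
    (DWmatrix h u) (DWmatrix h w)
  simp only [← DWmatrix_add_smul, det_DWmatrix, LinearMap.comp_apply, lcoeff_apply] at hF
  have hF0 : F ≠ 0 := fun h0 =>
    coeff_taylor_rootMultiplicity_ne_zero hu0 z (by simpa [h0] using (hF 0).symm)
  refine F.roots.toFinset.finite_toSet.subset fun τ hτ => ?_
  rw [Finset.mem_coe, Multiset.mem_toFinset, mem_roots hF0, IsRoot.def, hF]
  exact coeff_taylor_eq_zero_of_pow_dvd ((pow_dvd_pow _ (by omega)).trans hτ)

end DiscreteWronskian

def IsDWpolyGcd (h : ℂ) (V : Submodule ℂ ℂ[X]) (i : ℕ) (D : ℂ[X]) : Prop :=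
  D.Monic ∧ (∀ u : Fin i → ℂ[X], (∀ k, u k ∈ V) → D ∣ DWpoly h u) ∧
    ∀ D' : ℂ[X], (∀ u : Fin i → ℂ[X], (∀ k, u k ∈ V) → D' ∣ DWpoly h u) → D' ∣ D

namespace IsDWpolyGcd

variable {h : ℂ} {V : Submodule ℂ ℂ[X]} {i : ℕ} {D : ℂ[X]}

theorem monic (hD : IsDWpolyGcd h V i D) : D.Monic := hD.1

theorem dvd (hD : IsDWpolyGcd h V i D) {u : Fin i → ℂ[X]} (hu : ∀ k, u k ∈ V) :
    D ∣ DWpoly h u :=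
  hD.2.1 u hu

theorem dvd_of_forall_dvd (hD : IsDWpolyGcd h V i D) {D' : ℂ[X]}
    (hD' : ∀ u : Fin i → ℂ[X], (∀ k, u k ∈ V) → D' ∣ DWpoly h u) : D' ∣ D :=
  hD.2.2 D' hD'

theorem eq_one (hD : IsDWpolyGcd h V 1 D) (hbp : ∀ z : ℂ, ∃ v ∈ V, v.eval z ≠ 0) :
    D = 1 := by
  by_contra hne
  obtain ⟨z, hz⟩ := IsAlgClosed.exists_root D fun h0 =>
    hne (hD.monic.natDegree_eq_zero.mp (natDegree_eq_of_degree_eq_some h0))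
  obtain ⟨v, hv, hvz⟩ := hbp z
  have hDv : D ∣ v := by
    simpa [DWpoly, det_fin_one] using hD.dvd (u := fun _ => v) fun _ => hv
  exact hvz (eval_eq_zero_of_dvd_of_eval_eq_zero hDv hz)

theorem exists_not_dvd (hD : IsDWpolyGcd h V i D) (z : ℂ) :
    ∃ u : Fin i → ℂ[X], (∀ k, u k ∈ V) ∧
      ¬ (X - C z) ^ (rootMultiplicity z D + 1) ∣ DWpoly h u := by
  by_contra! hall
  exact (rootMultiplicity z D).lt_irrefl
    ((le_rootMultiplicity_iff hD.monic.ne_zero).mpr (hD.dvd_of_forall_dvd hall))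

theorem exists_not_dvd_of_inner {n : ℕ} {D' : ℂ[X]} (hD : IsDWpolyGcd h V (n + 2) D)
    (hD' : IsDWpolyGcd h V n D') (z z' : ℂ) :
    ∃ v : Fin (n + 2) → ℂ[X], (∀ k, v k ∈ V) ∧
      ¬ (X - C z) ^ (rootMultiplicity z D + 1) ∣ DWpoly h v ∧
      ¬ (X - C z') ^ (rootMultiplicity z' D' + 1) ∣
        DWpoly h fun k : Fin n => v k.castSucc.succ := by
  obtain ⟨u, huV, hu⟩ := hD.exists_not_dvd z
  obtain ⟨w, hwV, hw⟩ := hD'.exists_not_dvd z'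
  -- Take `v = u + τ • w'` with `w'` the tuple `w` padded by zeros: its inner part is
  -- `τ • (w + τ⁻¹ • u')`, so both conditions fail only for finitely many `τ`.
  let w' : Fin (n + 2) → ℂ[X] := Fin.cons 0 (Fin.snoc w 0)
  have hw'V : ∀ k, w' k ∈ V := by
    refine Fin.cases (by simp [w']) (fun k => Fin.lastCases ?_ (fun k => ?_) k)
    · simp [w']
    · simpa [w'] using hwV k
  have bad₁ := finite_setOf_pow_dvd_DWpoly_add_smul h z _ u w' hu
  have bad₂ := finite_setOf_pow_dvd_DWpoly_add_smul h z' _ w (fun k => u k.castSucc.succ) hw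
  obtain ⟨τ, hτ⟩ := (bad₁.union ((bad₂.image Inv.inv).insert 0)).exists_notMem
  simp only [Set.mem_union, Set.mem_insert_iff, Set.mem_image, Set.mem_ofPred_eq, not_or,
    not_exists, not_and] at hτ
  obtain ⟨hτ₁, hτ₀, hτ₂⟩ := hτ
  refine ⟨u + τ • w', fun k => V.add_mem (huV k) (V.smul_mem τ (hw'V k)), hτ₁, fun hdvd => ?_⟩
  have hmid : (fun k : Fin n => (u + τ • w') k.castSucc.succ) =
      τ • (w + τ⁻¹ • fun k => u k.castSucc.succ) := by
    funext k
    simp [w', smul_smul, hτ₀, add_comm]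
  rw [hmid, DWpoly_smul] at hdvd
  refine hτ₂ τ⁻¹ ?_ (inv_inv τ)
  simpa [smul_smul, hτ₀] using dvd_smul_of_dvd (τ ^ n)⁻¹ hdvd

theorem mul_comp_dvd {n : ℕ} {U₀ U₁ U₂ : ℂ[X]} (h₀ : IsDWpolyGcd h V n U₀)
    (h₁ : IsDWpolyGcd h V (n + 1) U₁) (h₂ : IsDWpolyGcd h V (n + 2) U₂) :
    U₁ * U₁.comp (X + C h) ∣ U₂ * U₀.comp (X + C h) := by
  classical
  have hL := h₁.monic.mul (h₁.monic.comp_X_add_C h)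
  have hR := h₂.monic.mul (h₀.monic.comp_X_add_C h)
  rw [IsAlgClosed.dvd_iff_roots_le_roots hL.ne_zero hR.ne_zero, Multiset.le_iff_count]
  intro z
  obtain ⟨v, hvV, hv, hvmid⟩ := h₂.exists_not_dvd_of_inner h₀ z (z + h)
  have hv0 : DWpoly h v ≠ 0 := fun h0 => hv (h0 ▸ dvd_zero _)
  have hmid0 : (DWpoly h fun k : Fin n => v k.castSucc.succ) ≠ 0 :=
    fun h0 => hvmid (h0 ▸ dvd_zero _)
  have hprod : DWpoly h v * (DWpoly h fun k : Fin n => v k.castSucc.succ).comp (X + C h) ≠ 0 :=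
    mul_ne_zero hv0 (comp_X_add_C_ne_zero_iff.mpr hmid0)
  have hle := rootMultiplicity_le_rootMultiplicity_of_dvd hprod
    (mul_comp_dvd_DWpoly_mul h v (h₁.dvd fun k => hvV _) (h₁.dvd fun k => hvV _)) z
  rw [rootMultiplicity_mul hL.ne_zero, rootMultiplicity_mul hprod, rootMultiplicity_comp_X_add_C,
    rootMultiplicity_comp_X_add_C] at hle
  rw [count_roots, count_roots, rootMultiplicity_mul hL.ne_zero, rootMultiplicity_mul hR.ne_zero,
    rootMultiplicity_comp_X_add_C, rootMultiplicity_comp_X_add_C]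
  have := (rootMultiplicity_le_iff hv0 _ _).mpr hv
  have := (rootMultiplicity_le_iff hmid0 _ _).mpr hvmid
  omega

end IsDWpolyGcd

section Frame

variable {R : Type*} [CommRing R] (h : R)

noncomputable def shiftedProd (g : R[X]) (k : ℕ) : R[X] :=
  ∏ j ∈ range k, g.comp (X + C ((j : R) * h))

theorem shiftedProd_succ (g : R[X]) (k : ℕ) :
    shiftedProd h g (k + 1) = g * (shiftedProd h g k).comp (X + C h) := by
  rw [shiftedProd, prod_range_succ', shiftedProd, Polynomial.prod_comp, mul_comm]
  congr 1
  · simp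
  · refine prod_congr rfl fun j _ => ?_
    rw [comp_assoc, add_comp, X_comp, C_comp, add_assoc, ← C_add]
    congr 3
    push_cast
    ring

theorem shiftedProd_mul_comp (g : R[X]) (k : ℕ) :
    shiftedProd h g (k + 2) * (shiftedProd h g k).comp (X + C h) =
      shiftedProd h g (k + 1) * (shiftedProd h g (k + 1)).comp (X + C h) := by
  rw [shiftedProd_succ h g (k + 1), shiftedProd_succ h g k]
  ring

theorem shiftedProd_sub_mul_comp (g : R[X]) (s t : ℕ) :
    shiftedProd h g (s + 1 - t) * (shiftedProd h g (s - 1 - t)).comp (X + C h) =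
      (if t = s then g else 1) *
        (shiftedProd h g (s - t) * (shiftedProd h g (s - t)).comp (X + C h)) := by
  rcases lt_trichotomy t s with hts | rfl | hst
  · obtain ⟨k, hk⟩ := Nat.exists_eq_add_of_lt hts
    rw [if_neg hts.ne, one_mul, show s + 1 - t = k + 2 by omega, show s - 1 - t = k by omega,
      show s - t = k + 1 by omega, shiftedProd_mul_comp]
  · simp [shiftedProd]
  · rw [if_neg hst.ne', one_mul, show s + 1 - t = 0 by omega, show s - 1 - t = 0 by omega,
      show s - t = 0 by omega]

noncomputable def framePoly {N : ℕ} (T : Fin N → R[X]) (i : ℕ) : R[X] :=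
  ∏ s : Fin N, shiftedProd h (T s) (i - 1 - s)

theorem framePoly_mul_comp {N : ℕ} (T : Fin N → R[X]) (s : Fin N) :
    framePoly h T (s + 2) * (framePoly h T s).comp (X + C h) =
      T s * (framePoly h T (s + 1) * (framePoly h T (s + 1)).comp (X + C h)) := by
  have hs : (s : ℕ) + 2 - 1 = s + 1 := rfl
  simp only [framePoly, Polynomial.prod_comp, ← prod_mul_distrib, hs, Nat.add_sub_cancel,
    shiftedProd_sub_mul_comp, Fin.val_inj]
  rw [prod_mul_distrib, prod_ite_eq' univ s T, if_pos (mem_univ s)]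

theorem forall_eq_framePoly_iff [IsDomain R] {N : ℕ} {W : ℕ → R[X]} (hW0 : W 0 = 1)
    (hW1 : W 1 = 1) (hW : ∀ i < N, W i ≠ 0) (T : Fin N → R[X]) :
    (∀ i ≤ N + 1, W i = framePoly h T i) ↔
      ∀ s : Fin N, T s * (W (s + 1) * (W (s + 1)).comp (X + C h)) =
        W (s + 2) * (W s).comp (X + C h) := by
  refine ⟨fun hT s => ?_, fun hT i hi => ?_⟩
  · rw [hT (s + 2) (by omega), hT s (by omega), hT (s + 1) (by omega), framePoly_mul_comp]
  induction i using Nat.strong_induction_on with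
  | _ i ih =>
    match i with
    | 0 => simp [hW0, framePoly, shiftedProd]
    | 1 => simp [hW1, framePoly, shiftedProd]
    | s + 2 =>
      have hs : s < N := by omega
      refine mul_right_cancel₀ (comp_X_add_C_ne_zero_iff (t := h) |>.mpr (hW s hs)) ?_
      rw [← hT ⟨s, hs⟩, ih s (by omega) (by omega), ih (s + 1) (by omega) (by omega)]
      exact (framePoly_mul_comp h T ⟨s, hs⟩).symm

theorem existsUnique_frame [IsDomain R] (N : ℕ) (W : ℕ → R[X]) (hW0 : W 0 = 1) (hW1 : W 1 = 1)
    (hmonic : ∀ i ≤ N + 1, (W i).Monic)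
    (hdvd : ∀ s < N,
      W (s + 1) * (W (s + 1)).comp (X + C h) ∣ W (s + 2) * (W s).comp (X + C h)) :
    ∃! T : Fin N → R[X], (∀ s, (T s).Monic) ∧ ∀ i ≤ N + 1, W i = framePoly h T i := by
  have frame_iff := forall_eq_framePoly_iff h hW0 hW1 fun i (hi : i < N) =>
    (hmonic i (by omega)).ne_zero
  set Q : ℕ → R[X] := fun s => W (s + 1) * (W (s + 1)).comp (X + C h)
  have hQ : ∀ s : Fin N, (Q s).Monic := fun s =>
    (hmonic _ (by omega)).mul ((hmonic _ (by omega)).comp_X_add_C h)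
  set T : Fin N → R[X] := fun s => (W (s + 2) * (W s).comp (X + C h)) /ₘ Q s
  have hT : ∀ s : Fin N, T s * Q s = W (s + 2) * (W s).comp (X + C h) := fun s => by
    have := modByMonic_add_div (W (s + 2) * (W s).comp (X + C h)) (Q s)
    rwa [(modByMonic_eq_zero_iff_dvd (hQ s)).mpr (hdvd s s.isLt), zero_add, mul_comm] at this
  refine ⟨T, ⟨fun s => (hQ s).of_mul_monic_right ?_, (frame_iff T).mpr hT⟩,
    fun T' ⟨_, hT'⟩ => funext fun s => ?_⟩
  · rw [hT s]
    exact (hmonic _ (by omega)).mul ((hmonic _ (by omega)).comp_X_add_C h)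
  · exact mul_right_cancel₀ (hQ s).ne_zero (((frame_iff T').mp hT' s).trans (hT s).symm)

end Frame

theorem stmt13_general (h : ℂ) (N : ℕ) (V : Submodule ℂ (Polynomial ℂ))
    (hbp : ∀ z : ℂ, ∃ v ∈ V, Polynomial.eval z v ≠ 0)
    (U : ℕ → Polynomial ℂ)
    (hU : ∀ i, 1 ≤ i → i ≤ N + 1 → (U i).Monic ∧
      (∀ u : Fin i → Polynomial ℂ, (∀ k, u k ∈ V) → U i ∣ DWpoly h u) ∧
      (∀ D : Polynomial ℂ,
        (∀ u : Fin i → Polynomial ℂ, (∀ k, u k ∈ V) → D ∣ DWpoly h u) → D ∣ U i)) :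
    ∃! T : Fin N → Polynomial ℂ, (∀ s, (T s).Monic) ∧
      ∀ i, 1 ≤ i → i ≤ N + 1 →
        U i = ∏ s : Fin N, ∏ j ∈ Finset.range (i - 1 - s.1),
          (T s).comp (Polynomial.X + Polynomial.C (j * h)) := by
  have hU1 : U 1 = 1 := IsDWpolyGcd.eq_one (hU 1 le_rfl (by omega)) hbp
  -- `U 0` is unconstrained; the recurrence needs the empty Wronskian `1` there.
  let W := Function.update U 0 1
  have hW : ∀ i, 1 ≤ i → W i = U i := fun i hi => Function.update_of_ne (by omega) _ _
  have frame : ∃! T : Fin N → ℂ[X], (∀ s, (T s).Monic) ∧ ∀ i ≤ N + 1, W i = framePoly h T i := by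
    refine existsUnique_frame h N W (by simp [W]) (by simp [W, hU1]) (fun i hi => ?_)
      (fun s hs => ?_)
    · rcases i with _ | i
      · simp [W]
      · rw [hW _ (by omega)]
        exact (hU _ (by omega) hi).1
    · rcases s with _ | n
      · simp [W, hU1]
      · rw [hW _ (by omega), hW _ (by omega), hW _ (by omega)]
        exact IsDWpolyGcd.mul_comp_dvd (hU _ (by omega) (by omega))
          (hU _ (by omega) (by omega)) (hU _ (by omega) (by omega))
  refine (existsUnique_congr fun T => and_congr_right fun _ => ?_).mp frame
  refine ⟨fun hT i h₁ h₂ => (hW i h₁).symm.trans (hT i h₂), fun hT i hi => ?_⟩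
  rcases i with _ | i
  · simp [W, framePoly, shiftedProd]
  · rw [hW _ (by omega)]
    exact hT _ (by omega) hi

/-- for an `(N+1)`-dimensional space `V` of polynomials without base
points, with `U_i` the monic gcd of the order-`i` discrete Wronskians of elements of
`V`, there is a unique sequence of monic polynomials `T_1, ..., T_N` with
`U_i = ∏_{s=1}^{i-1} ∏_{j=1}^{i-s} T_s(x+(j-1)h)` for `i = 1, ..., N+1`. -/
theorem stmt13 (h : ℂ) (hh : h ≠ 0) (N : ℕ) (V : Submodule ℂ (Polynomial ℂ))
    (hdim : Module.finrank ℂ V = N + 1)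
    (hbp : ∀ z : ℂ, ∃ v ∈ V, Polynomial.eval z v ≠ 0)
    (U : ℕ → Polynomial ℂ)
    (hU : ∀ i, 1 ≤ i → i ≤ N + 1 → (U i).Monic ∧
      (∀ u : Fin i → Polynomial ℂ, (∀ k, u k ∈ V) → U i ∣ DWpoly h u) ∧
      (∀ D : Polynomial ℂ,
        (∀ u : Fin i → Polynomial ℂ, (∀ k, u k ∈ V) → D ∣ DWpoly h u) → D ∣ U i)) :
    ∃! T : Fin N → Polynomial ℂ, (∀ s, (T s).Monic) ∧
      ∀ i, 1 ≤ i → i ≤ N + 1 →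
        U i = ∏ s : Fin N, ∏ j ∈ Finset.range (i - 1 - s.1),
          (T s).comp (Polynomial.X + Polynomial.C (j * h)) :=
  stmt13_general h N V hbp U hU
end
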